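/- Let q = 4f + 1 be a prime power and F_q a finite field with primitive element w; let C_0 = ⟨w^4⟩ with cosets C_i = w^i C_0. Suppose C_0 is a (q, (q-1)/4, (q-5)/16)-difference set in G = (F_q, +). Let l ∈ {0,1,2,3}, P = C_l, N = G \ C_l. Then D = P - N is a (q, q, (q-1)/4)-signed difference set. -/

import Mathlib

open Finset

noncomputable def eltA {H : Type*} [AddGroup H] (S : Finset H) : AddMonoidAlgebra ℤ H :=
  ∑ s ∈ S, AddMonoidAlgebra.single s 1

noncomputable def starA {H : Type*} [AddGroup H] [Fintype H]
    (A : AddMonoidAlgebra ℤ H) : AddMonoidAlgebra ℤ H :=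
  ∑ h : H, AddMonoidAlgebra.single (-h) (A.coeff h)

/-- The fourth-order cyclotomic class `C_l = {w^{4j+l} : 0 ≤ j ≤ f-1}`. -/
def cycClass {F : Type*} [Field F] [Fintype F] [DecidableEq F]
    (w : Fˣ) (f l : ℕ) : Finset F :=
  (Finset.range f).image fun j => (w : F) ^ (4 * j + l)

set_option linter.unusedSectionVars false

section lemmas
variable {H : Type*} [AddCommGroup H] [Fintype H] [DecidableEq H]

lemma eltA_apply (S : Finset H) (h : H) : (eltA S).coeff h = if h ∈ S then 1 else 0 := by
  rw [eltA, AddMonoidAlgebra.coeff_sum, Finsupp.finset_sum_apply]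
  simp [AddMonoidAlgebra.coeff_single, Finsupp.single_apply, Finset.sum_ite_eq]

lemma starA_eltA (S : Finset H) : starA (eltA S) = ∑ s ∈ S, AddMonoidAlgebra.single (-s) 1 := by
  rw [starA]
  rw [show (∑ h : H, AddMonoidAlgebra.single (-h) ((eltA S).coeff h))
      = ∑ h : H, if h ∈ S then AddMonoidAlgebra.single (-h) 1 else 0 by
    refine Finset.sum_congr rfl fun h _ => ?_
    rw [eltA_apply]
    split <;> simp]
  rw [Finset.sum_ite_mem, Finset.univ_inter]

lemma starA_sub (A B : AddMonoidAlgebra ℤ H) : starA (A - B) = starA A - starA B := by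
  rw [starA, starA, starA, ← Finset.sum_sub_distrib]
  refine Finset.sum_congr rfl fun h _ => ?_
  rw [show (A - B).coeff h = A.coeff h - B.coeff h from rfl]
  exact AddMonoidAlgebra.single_sub _ _ _

lemma starA_univ : starA (eltA (univ : Finset H)) = eltA (univ : Finset H) := by
  rw [starA_eltA, eltA]
  exact Fintype.sum_equiv (Equiv.neg H) _ _ fun s => rfl

lemma sum_single_const (c : ℤ) :
    (∑ s : H, AddMonoidAlgebra.single s c) = c • eltA (univ : Finset H) := by
  rw [eltA, Finset.smul_sum]
  exact Finset.sum_congr rfl fun s _ => by rw [AddMonoidAlgebra.smul_single, smul_eq_mul, mul_one]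

lemma single_mul_eltA_univ (a : H) (c : ℤ) :
    AddMonoidAlgebra.single a c * eltA (univ : Finset H) = c • eltA (univ : Finset H) := by
  rw [← sum_single_const c, eltA, Finset.mul_sum]
  rw [show (∑ s : H, AddMonoidAlgebra.single a c * AddMonoidAlgebra.single s 1)
      = ∑ s : H, AddMonoidAlgebra.single (a + s) c by
    refine Finset.sum_congr rfl fun s _ => ?_
    rw [AddMonoidAlgebra.single_mul_single, mul_one]]
  exact Fintype.sum_equiv (Equiv.addLeft a) _ _ fun s => rfl

lemma eltA_univ_mul_single (a : H) (c : ℤ) :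
    eltA (univ : Finset H) * AddMonoidAlgebra.single a c = c • eltA (univ : Finset H) := by
  rw [← sum_single_const c, eltA, Finset.sum_mul]
  rw [show (∑ s : H, AddMonoidAlgebra.single s 1 * AddMonoidAlgebra.single a c)
      = ∑ s : H, AddMonoidAlgebra.single (s + a) c by
    refine Finset.sum_congr rfl fun s _ => ?_
    rw [AddMonoidAlgebra.single_mul_single, one_mul]]
  exact Fintype.sum_equiv (Equiv.addRight a) _ _ fun s => rfl

lemma eltA_mul_univ (S : Finset H) :
    eltA S * eltA (univ : Finset H) = (S.card : ℤ) • eltA (univ : Finset H) := by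
  nth_rewrite 1 [eltA]
  rw [Finset.sum_mul]
  rw [show (∑ s ∈ S, AddMonoidAlgebra.single s (1:ℤ) * eltA (univ : Finset H))
      = ∑ _s ∈ S, eltA (univ : Finset H) by
    refine Finset.sum_congr rfl fun s _ => ?_
    rw [single_mul_eltA_univ, one_smul]]
  rw [Finset.sum_const, natCast_zsmul]

lemma univ_mul_starA_eltA (S : Finset H) :
    eltA (univ : Finset H) * starA (eltA S) = (S.card : ℤ) • eltA (univ : Finset H) := by
  rw [starA_eltA, Finset.mul_sum]
  rw [show (∑ s ∈ S, eltA (univ : Finset H) * AddMonoidAlgebra.single (-s) (1:ℤ))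
      = ∑ _s ∈ S, eltA (univ : Finset H) by
    refine Finset.sum_congr rfl fun s _ => ?_
    rw [eltA_univ_mul_single, one_smul]]
  rw [Finset.sum_const, natCast_zsmul]

lemma eltA_sdiff_univ (S : Finset H) :
    eltA (univ \ S) = eltA (univ : Finset H) - eltA S := by
  rw [eq_sub_iff_add_eq, eltA, eltA, eltA, Finset.sum_sdiff (Finset.subset_univ S)]

end lemmas

section field
variable {F : Type*} [Field F] [Fintype F] [DecidableEq F]

lemma card_cycClass (q f : ℕ) (hq : q = Fintype.card F) (hqf : q = 4 * f + 1)
    (w : Fˣ) (hw : ∀ u : Fˣ, u ∈ Subgroup.zpowers w) (l : ℕ) (hl : l < 4) :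
    (cycClass w f l).card = f := by
  have hord : orderOf w = 4 * f := by
    rw [orderOf_eq_card_of_forall_mem_zpowers hw, Nat.card_eq_fintype_card,
      Fintype.card_units, ← hq, hqf]
    omega
  have hinj : Set.InjOn (fun j => (w : F) ^ (4 * j + l)) (Finset.range f : Set ℕ) := by
    intro i hi j hj hij
    simp only [Finset.coe_range, Set.mem_Iio] at hi hj
    have : ((w ^ (4 * i + l) : Fˣ) : F) = ((w ^ (4 * j + l) : Fˣ) : F) := by
      push_cast; exact hij
    have h2 : w ^ (4 * i + l) = w ^ (4 * j + l) := Units.ext this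
    have := pow_injOn_Iio_orderOf (x := w) (by simp only [Set.mem_Iio, hord]; omega)
      (by simp only [Set.mem_Iio, hord]; omega) h2
    omega
  rw [cycClass, Finset.card_image_of_injOn hinj, Finset.card_range]

lemma cycClass_eq_image (w : Fˣ) (f l : ℕ) :
    cycClass w f l = (cycClass w f 0).image (fun x => (w : F) ^ l * x) := by
  rw [cycClass, cycClass, Finset.image_image]
  refine Finset.image_congr fun j _ => ?_
  simp [pow_add, mul_comm]

/-- multiplication by a nonzero element as an additive equivalence -/
noncomputable def mulAddEquiv (c : F) (hc : c ≠ 0) : F ≃+ F :=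
  { Equiv.mulLeft₀ c hc with map_add' := mul_add c }

lemma mulAddEquiv_apply (c : F) (hc : c ≠ 0) (x : F) : mulAddEquiv c hc x = c * x := rfl

lemma phi_eltA (c : F) (hc : c ≠ 0) (S : Finset F) :
    AddMonoidAlgebra.domCongr ℤ ℤ (mulAddEquiv c hc) (eltA S)
      = eltA (S.image (fun x => c * x)) := by
  rw [eltA, map_sum, eltA, Finset.sum_image (fun x _ y _ h => mul_left_cancel₀ hc h)]
  exact Finset.sum_congr rfl fun s _ => AddMonoidAlgebra.domCongr_single _ _ _

lemma phi_starA_eltA (c : F) (hc : c ≠ 0) (S : Finset F) :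
    AddMonoidAlgebra.domCongr ℤ ℤ (mulAddEquiv c hc) (starA (eltA S))
      = starA (eltA (S.image (fun x => c * x))) := by
  rw [starA_eltA, map_sum, starA_eltA,
    Finset.sum_image (fun x _ y _ h => mul_left_cancel₀ hc h)]
  refine Finset.sum_congr rfl fun s _ => ?_
  rw [AddMonoidAlgebra.domCongr_single]
  congr 1
  rw [mulAddEquiv_apply, mul_neg]

lemma image_univ_mul (c : F) (hc : c ≠ 0) :
    (univ : Finset F).image (fun x => c * x) = univ := by
  apply Finset.image_univ_of_surjective
  exact fun y => ⟨c⁻¹ * y, by field_simp⟩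

end field

/-- if `C_0` is a `(q,(q-1)/4,(q-5)/16)`-difference set in
`(F_q,+)` (`q = 4f+1`), then for each `l ∈ {0,1,2,3}`, taking `P = C_l` and
`N = G \ C_l`, the signed set `D = P - N` is a `(q, q, (q-1)/4)`-signed
difference set. -/
theorem sds_from_cyclotomic_ds_q1 {F : Type*} [Field F] [Fintype F] [DecidableEq F]
    (q f : ℕ) (hq : q = Fintype.card F) (hqf : q = 4 * f + 1)
    (w : Fˣ) (hw : ∀ u : Fˣ, u ∈ Subgroup.zpowers w)
    (kDS lamDS : ℤ) (hkDS : 4 * kDS = (q : ℤ) - 1) (hlamDS : 16 * lamDS = (q : ℤ) - 5)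
    (hDS : eltA (cycClass w f 0) * starA (eltA (cycClass w f 0)) =
      lamDS • (eltA (univ : Finset F) - AddMonoidAlgebra.single 0 1) +
        kDS • AddMonoidAlgebra.single 0 1)
    (l : ℕ) (hl : l < 4)
    (P N : Finset F)
    (hP : P = cycClass w f l)
    (hN : N = univ \ cycClass w f l)
    (lam : ℤ) (hlam : 4 * lam = (q : ℤ) - 1) :
    (eltA P - eltA N) * starA (eltA P - eltA N) =
      lam • (eltA (univ : Finset F) - AddMonoidAlgebra.single 0 1) +
        (q : ℤ) • AddMonoidAlgebra.single 0 1 := by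
  have hc : ((w : F) ^ l) ≠ 0 := pow_ne_zero _ (Units.ne_zero w)
  have hX : eltA (cycClass w f l) * starA (eltA (cycClass w f l))
      = lamDS • (eltA (univ : Finset F) - AddMonoidAlgebra.single 0 1) +
        kDS • AddMonoidAlgebra.single 0 1 := by
    have himg : (cycClass w f 0).image (fun x => ((w : F) ^ l) * x) = cycClass w f l :=
      (cycClass_eq_image w f l).symm
    have h := congrArg (AddMonoidAlgebra.domCongr ℤ ℤ (mulAddEquiv _ hc)) hDS
    rw [map_mul, phi_eltA, phi_starA_eltA, himg, map_add, map_zsmul, map_zsmul, map_sub,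
      phi_eltA, image_univ_mul _ hc, AddMonoidAlgebra.domCongr_single] at h
    simpa only [map_zero] using h
  set G := eltA (univ : Finset F) with hG
  set e0 := AddMonoidAlgebra.single (0 : F) (1 : ℤ) with he0
  set A := eltA (cycClass w f l) with hA
  have hcard : (cycClass w f l).card = f := card_cycClass q f hq hqf w hw l hl
  have hAG : A * G = (f : ℤ) • G := by rw [hA, hG, eltA_mul_univ, hcard]
  have hGA : G * starA A = (f : ℤ) • G := by rw [hA, hG, univ_mul_starA_eltA, hcard]
  have hGG : G * G = (q : ℤ) • G := by
    rw [hG, eltA_mul_univ, Finset.card_univ, ← hq]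
  have hD : eltA P - eltA N = A + A - G := by
    rw [hP, hN, eltA_sdiff_univ, ← hG, ← hA]; abel
  have hstarD : starA (A + A - G) = starA A + starA A - G := by
    have h1 : A + A - G = A - (G - A) := by abel
    have h2 : starA A + starA A - G = starA A - (G - starA A) := by abel
    rw [h1, h2, starA_sub, starA_sub, hG, starA_univ]
  rw [hD, hstarD]
  have expand : (A + A - G) * (starA A + starA A - G)
      = (A * starA A + A * starA A + A * starA A + A * starA A)
        - (A * G + A * G) - (G * starA A + G * starA A) + G * G := by
    ring
  rw [expand, hX, hAG, hGA, hGG]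
  have hf : (f : ℤ) = 4 * lamDS + 1 := by
    have : (q : ℤ) = 4 * (f : ℤ) + 1 := by exact_mod_cast congrArg (Nat.cast : ℕ → ℤ) hqf
    linarith
  have hlam' : lam = (f : ℤ) := by
    have : (q : ℤ) = 4 * (f : ℤ) + 1 := by exact_mod_cast congrArg (Nat.cast : ℕ → ℤ) hqf
    linarith
  have hq' : (q : ℤ) = 4 * (f : ℤ) + 1 := by exact_mod_cast congrArg (Nat.cast : ℕ → ℤ) hqf
  have hk' : kDS = (f : ℤ) := by linarith
  rw [hlam', hk', hq', hf]
  match_scalars <;> ring
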